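/- arXiv:2104.02448 — 2 statements merged into one kernel-verified Lean document; each statement's English description precedes it below -/
import Mathlib

section
/- With w(i,k) as defined (indices of p, q taken in {1,...,n} and the second argument of w taken modulo n), for all 1 ≤ i, k ≤ n: p_k · w(i,k) − q_k · w(i,k−1) equals p_1⋯p_n − q_1⋯q_n when i = k, and equals 0 when i ≠ k (here w(i,0) is interpreted as w(i,n)). -/
/-! Passing from `w(i,k-1)` to `w(i,k)` moves the index `k` from the `p`-block to the `q`-block,
so for `i ≠ k` both `p_k w(i,k)` and `q_k w(i,k-1)` are the same monomial. For `i = k` the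
index `k` is missing from both weights instead, and multiplying back gives `∏ p` and `∏ q`.
The formula for `w(i,0)` already agrees with `w(i,n)`, which takes care of the wrap-around at
`k = 1`. -/

open Finset

/-- The weight `w(i,k)` of the two-species disordered ASEP. -/
noncomputable def asepWeight {R : Type*} [CommRing R] (p q : ℕ → R) (n i k : ℕ) : R :=
  if i ≤ k then
    (∏ j ∈ Icc 1 (i-1), p j) * (∏ j ∈ Icc (i+1) k, q j) * (∏ j ∈ Icc (k+1) n, p j)
  else
    (∏ j ∈ Icc 1 k, q j) * (∏ j ∈ Icc (k+1) (i-1), p j) * (∏ j ∈ Icc (i+1) n, q j)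

namespace Finset

variable {M : Type*} [CommMonoid M]

theorem mul_prod_Icc_add_one (f : ℕ → M) {a b : ℕ} (hab : a ≤ b) :
    f a * ∏ j ∈ Icc (a + 1) b, f j = ∏ j ∈ Icc a b, f j := by
  rw [Icc_eq_cons_Ioc hab, prod_cons, Icc_add_one_left_eq_Ioc]

theorem prod_Icc_eq_prod_Icc_mul_mul_prod_Icc (f : ℕ → M) {a b c : ℕ} (hab : a ≤ b + 1)
    (hbc : b + 1 ≤ c) :
    ∏ j ∈ Icc a c, f j = (∏ j ∈ Icc a b, f j) * f (b + 1) * ∏ j ∈ Icc (b + 1 + 1) c, f j := by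
  rw [mul_assoc, mul_prod_Icc_add_one f hbc, ← Ico_add_one_right_eq_Icc,
    ← Ico_add_one_right_eq_Icc, ← Ico_add_one_right_eq_Icc,
    prod_Ico_consecutive f hab (by omega)]

end Finset

section

variable {R : Type*} [CommRing R] (p q : ℕ → R) {n i m : ℕ}

theorem asepWeight_zero (hi : 1 ≤ i) (hin : i ≤ n) :
    asepWeight p q n i 0 = asepWeight p q n i n := by
  simp [asepWeight, hin, Nat.one_le_iff_ne_zero.mp hi]

theorem p_mul_asepWeight_succ_self_sub (hm : m + 1 ≤ n) :
    p (m + 1) * asepWeight p q n (m + 1) (m + 1) - q (m + 1) * asepWeight p q n (m + 1) m =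
      (∏ j ∈ Icc 1 n, p j) - ∏ j ∈ Icc 1 n, q j := by
  rw [asepWeight, asepWeight, if_pos le_rfl, if_neg (by omega), add_tsub_cancel_right,
    Icc_eq_empty_of_lt (show m + 1 < m + 1 + 1 by omega), Icc_eq_empty_of_lt (Nat.lt_succ_self m),
    prod_empty, prod_empty, prod_Icc_eq_prod_Icc_mul_mul_prod_Icc p (Nat.le_add_left 1 m) hm,
    prod_Icc_eq_prod_Icc_mul_mul_prod_Icc q (Nat.le_add_left 1 m) hm]
  ring

theorem p_mul_asepWeight_succ_of_lt (hi : i ≤ m) (hm : m + 1 ≤ n) :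
    p (m + 1) * asepWeight p q n i (m + 1) = q (m + 1) * asepWeight p q n i m := by
  rw [asepWeight, asepWeight, if_pos (by omega), if_pos hi, prod_Icc_succ_top (by omega),
    ← mul_prod_Icc_add_one p hm]
  ring

theorem p_mul_asepWeight_succ_of_gt (hi : m + 1 < i) :
    p (m + 1) * asepWeight p q n i (m + 1) = q (m + 1) * asepWeight p q n i m := by
  rw [asepWeight, asepWeight, if_neg (by omega), if_neg (by omega), prod_Icc_succ_top (by omega),
    ← mul_prod_Icc_add_one p (show m + 1 ≤ i - 1 by omega)]
  ring

end

theorem stmt_3_general {R : Type*} [CommRing R] (n : ℕ) (p q : ℕ → R)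
    (i k : ℕ) (hi : i ∈ Icc 1 n) (hk : k ∈ Icc 1 n) :
    p k * asepWeight p q n i k - q k * asepWeight p q n i (if k = 1 then n else k - 1) =
      if i = k then (∏ j ∈ Icc 1 n, p j) - (∏ j ∈ Icc 1 n, q j) else 0 := by
  obtain ⟨hi1, hin⟩ := mem_Icc.mp hi
  obtain ⟨hk1, hkn⟩ := mem_Icc.mp hk
  obtain ⟨m, rfl⟩ := Nat.exists_eq_add_of_le' hk1
  have hprev : asepWeight p q n i (if m + 1 = 1 then n else m + 1 - 1) = asepWeight p q n i m := by
    split_ifs with hm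
    · rw [show m = 0 by omega, asepWeight_zero p q hi1 hin]
    · rfl
  rw [hprev]
  split_ifs with hik
  · subst hik
    exact p_mul_asepWeight_succ_self_sub p q hkn
  · rw [sub_eq_zero]
    rcases Nat.lt_or_gt_of_ne hik with hlt | hgt
    · exact p_mul_asepWeight_succ_of_lt p q (Nat.le_of_lt_succ hlt) hkn
    · exact p_mul_asepWeight_succ_of_gt p q hgt

theorem stmt_3 {R : Type*} [CommRing R] (n : ℕ) (hn : 1 ≤ n) (p q : ℕ → R)
    (i k : ℕ) (hi : i ∈ Icc 1 n) (hk : k ∈ Icc 1 n) :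
    p k * asepWeight p q n i k - q k * asepWeight p q n i (if k = 1 then n else k - 1) =
      if i = k then (∏ j ∈ Icc 1 n, p j) - (∏ j ∈ Icc 1 n, q j) else 0 :=
  stmt_3_general n p q i k hi hk
end

section
/- Summing the weight identity of Lemma 'lem:2wts' over i: for each k ∈ {1,...,n}, p_k · W(k) − q_k · W(k−1) = p_1⋯p_n − q_1⋯q_n, where W(k) = Σ_{i=1}^n w(i,k) and W(0) := W(n). -/
open Finset

/-- Column weight `W(k) = Σ_{i=1}^n w(i,k)`. -/
noncomputable def Wcol {R : Type*} [CommRing R] (p q : ℕ → R) (n k : ℕ) : R :=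
  ∑ i ∈ Icc 1 n, asepWeight p q n i k

/-!
For `i ≠ k` the weights `w(i, k)` and `w(i, k - 1)` are the same product except for the factor
at site `k`, which is `q k` in the first and `p k` in the second, so
`p k * w(i, k) = q k * w(i, k - 1)`. For `i = k` the factor at site `k` is missing from both, and
the two terms complete to `∏ p` and `∏ q`. Summing over `i` leaves only the diagonal term.
-/

namespace Finset

theorem prod_Ioc_succ_bot {M : Type*} [CommMonoid M] {a b : ℕ} (hab : a < b) (f : ℕ → M) :
    ∏ k ∈ Ioc a b, f k = f (a + 1) * ∏ k ∈ Ioc (a + 1) b, f k := by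
  rw [← prod_Ioc_consecutive f a.le_succ hab, Nat.Ioc_succ_singleton, prod_singleton]

end Finset

section AsepWeight

variable {R : Type*} [CommRing R] (p q : ℕ → R) {n i k : ℕ}

theorem asepWeight_of_le (h : i ≤ k) :
    asepWeight p q n i k =
      (∏ j ∈ Ioc 0 (i - 1), p j) * (∏ j ∈ Ioc i k, q j) * ∏ j ∈ Ioc k n, p j := by
  simp only [asepWeight, if_pos h, ← Icc_add_one_left_eq_Ioc, zero_add]

theorem asepWeight_of_lt (h : k < i) :
    asepWeight p q n i k =
      (∏ j ∈ Ioc 0 k, q j) * (∏ j ∈ Ioc k (i - 1), p j) * ∏ j ∈ Ioc i n, q j := by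
  simp only [asepWeight, if_neg h.not_ge, ← Icc_add_one_left_eq_Ioc, zero_add]

/- The `k < i` formula at `k = 0` already gives `w(i, n)`: this is the paper's convention
`w(i, 0) := w(i, n)`, and it lets `W(k - 1)` be read literally also for `k = 1`. -/
theorem asepWeight_n_eq_asepWeight_zero (hi : 1 ≤ i) (hin : i ≤ n) :
    asepWeight p q n i n = asepWeight p q n i 0 := by
  rw [asepWeight_of_le p q hin, asepWeight_of_lt p q hi, Ioc_self, Ioc_self, prod_empty,
    prod_empty, mul_one, one_mul]

theorem Wcol_n_eq_Wcol_zero : Wcol p q n n = Wcol p q n 0 :=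
  sum_congr rfl fun _ hi => asepWeight_n_eq_asepWeight_zero p q (mem_Icc.1 hi).1 (mem_Icc.1 hi).2

theorem mul_asepWeight_succ_sub_mul_asepWeight (hk : k < n) (i : ℕ) :
    p (k + 1) * asepWeight p q n i (k + 1) - q (k + 1) * asepWeight p q n i k =
      if i = k + 1 then (∏ j ∈ Ioc 0 n, p j) - ∏ j ∈ Ioc 0 n, q j else 0 := by
  rcases lt_trichotomy i (k + 1) with hlt | rfl | hgt
  · rw [asepWeight_of_le p q hlt.le, asepWeight_of_le p q (Nat.le_of_lt_succ hlt),
      prod_Ioc_succ_top (Nat.le_of_lt_succ hlt), prod_Ioc_succ_bot hk, if_neg hlt.ne]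
    ring
  · rw [asepWeight_of_le p q le_rfl, asepWeight_of_lt p q k.lt_succ_self, if_pos rfl,
      Nat.add_sub_cancel, ← prod_Ioc_consecutive p k.zero_le hk.le,
      ← prod_Ioc_consecutive q k.zero_le hk.le, prod_Ioc_succ_bot hk p, prod_Ioc_succ_bot hk q,
      Ioc_self, Ioc_self, prod_empty, prod_empty]
    ring
  · rw [asepWeight_of_lt p q hgt, asepWeight_of_lt p q (k.lt_succ_self.trans hgt),
      prod_Ioc_succ_top k.zero_le, prod_Ioc_succ_bot (Nat.lt_sub_of_add_lt hgt), if_neg hgt.ne']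
    ring

end AsepWeight

theorem stmt_12_general {R : Type*} [CommRing R] (n : ℕ) (p q : ℕ → R)
    (k : ℕ) (hk : k ∈ Icc 1 n) :
    p k * Wcol p q n k - q k * Wcol p q n (if k = 1 then n else k - 1) =
      (∏ j ∈ Icc 1 n, p j) - (∏ j ∈ Icc 1 n, q j) := by
  obtain ⟨m, rfl⟩ : ∃ m, k = m + 1 := Nat.exists_eq_add_one.2 (mem_Icc.1 hk).1
  have hm : m < n := (mem_Icc.1 hk).2
  have hprev : Wcol p q n (if m + 1 = 1 then n else m + 1 - 1) = Wcol p q n m := by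
    split_ifs with h
    · rw [Wcol_n_eq_Wcol_zero, Nat.succ_inj.1 h]
    · rfl
  rw [hprev, Wcol, Wcol, mul_sum, mul_sum, ← sum_sub_distrib,
    sum_congr rfl fun i _ => mul_asepWeight_succ_sub_mul_asepWeight p q hm i,
    sum_ite_eq' _ _, if_pos hk, ← Icc_add_one_left_eq_Ioc, zero_add]

theorem stmt_12 {R : Type*} [CommRing R] (n : ℕ) (hn : 1 ≤ n) (p q : ℕ → R)
    (k : ℕ) (hk : k ∈ Icc 1 n) :
    p k * Wcol p q n k - q k * Wcol p q n (if k = 1 then n else k - 1) =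
      (∏ j ∈ Icc 1 n, p j) - (∏ j ∈ Icc 1 n, q j) :=
  stmt_12_general n p q k hk
end
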